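/- arXiv:2112.01359 — 3 statements merged into one kernel-verified Lean document; each statement's English description precedes it below -/
import Mathlib

section
/- The directional derivative of the map j : L¹(Ω) → ℝ, j(u) = ‖u‖_{L¹(Ω)}, at u in direction v is j'(u;v) = ∫_{Ω⁺_u} v dx − ∫_{Ω⁻_u} v dx + ∫_{Ω⁰_u} |v| dx, where Ω⁺_u = {u > 0}, Ω⁻_u = {u < 0}, Ω⁰_u = {u = 0}. -/
open MeasureTheory Filter Topology Set

/-!
The difference quotient `(|a + t b| - |a|) / t` is bounded by `|b|` and, as `t → 0⁺`, tends to
`b`, `-b` or `|b|` according as `a > 0`, `a < 0` or `a = 0`: away from `0` the absolute value is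
differentiable, and at `0` it is positively homogeneous. Writing the norm of `L¹` as an integral,
dominated convergence gives the directional derivative of the norm.
-/

noncomputable def absDirDeriv (a b : ℝ) : ℝ := if a = 0 then |b| else SignType.sign a * b

theorem tendsto_abs_add_mul_sub_abs_div (a b : ℝ) :
    Tendsto (fun t : ℝ => (|a + t * b| - |a|) / t) (𝓝[>] 0) (𝓝 (absDirDeriv a b)) := by
  by_cases ha : a = 0
  · subst ha
    refine tendsto_const_nhds.congr' ?_
    filter_upwards [self_mem_nhdsWithin] with t (ht : 0 < t)
    rw [absDirDeriv, if_pos rfl, zero_add, abs_zero, sub_zero, abs_mul, abs_of_pos ht,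
      mul_div_cancel_left₀ _ ht.ne']
  · have hderiv : HasDerivAt (fun t : ℝ => |a + t * b|) (SignType.sign a * b) 0 := by
      have hinner : HasDerivAt (fun t : ℝ => a + t * b) b 0 := by
        simpa using ((hasDerivAt_id (0 : ℝ)).mul_const b).const_add a
      exact (hasDerivAt_abs (by simpa using ha)).comp_of_eq 0 hinner (by simp)
    simpa [absDirDeriv, ha, div_eq_inv_mul] using hderiv.tendsto_slope_zero_right

theorem abs_abs_add_mul_sub_abs_div_le {t : ℝ} (ht : 0 < t) (a b : ℝ) :
    |(|a + t * b| - |a|) / t| ≤ |b| := by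
  rw [abs_div, abs_of_pos ht, div_le_iff₀ ht]
  calc |(|a + t * b| - |a|)| ≤ |a + t * b - a| := abs_abs_sub_abs_le_abs_sub _ _
    _ = |b| * t := by rw [add_sub_cancel_left, abs_mul, abs_of_pos ht, mul_comm]

section

variable {Ω : Type*} [MeasurableSpace Ω] {μ : Measure Ω}

theorem integral_absDirDeriv {f g : Ω → ℝ}
    (hf : Measurable f) (hg : Integrable g μ) :
    ∫ x, absDirDeriv (f x) (g x) ∂μ
      = (∫ x in {x | 0 < f x}, g x ∂μ) - (∫ x in {x | f x < 0}, g x ∂μ)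
        + ∫ x in {x | f x = 0}, |g x| ∂μ := by
  have hpos : MeasurableSet {x | 0 < f x} := measurableSet_lt measurable_const hf
  have hneg : MeasurableSet {x | f x < 0} := measurableSet_lt hf measurable_const
  have hzero : MeasurableSet {x | f x = 0} := hf (measurableSet_singleton 0)
  have hsplit : (fun x => absDirDeriv (f x) (g x)) = fun x =>
      {x | 0 < f x}.indicator g x + {x | f x < 0}.indicator (fun x => -g x) x
        + {x | f x = 0}.indicator (fun x => |g x|) x := by
    ext x
    rcases lt_trichotomy (f x) 0 with h | h | h
    · simp [absDirDeriv, h, h.ne, not_lt.2 h.le]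
    · simp [absDirDeriv, h]
    · simp [absDirDeriv, h, h.ne', not_lt.2 h.le]
  have hposi : Integrable (fun x => {x | 0 < f x}.indicator g x) μ := hg.indicator hpos
  have hnegi : Integrable (fun x => {x | f x < 0}.indicator (fun x => -g x) x) μ :=
    hg.neg.indicator hneg
  rw [hsplit, integral_add (hposi.fun_add hnegi) (hg.abs.indicator hzero),
    integral_add hposi hnegi, integral_indicator hpos, integral_indicator hneg,
    integral_indicator hzero, integral_neg, ← sub_eq_add_neg]

theorem L1.norm_add_smul_sub_norm_div_eq_integral (u v : Lp ℝ 1 μ) (t : ℝ) :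
    (‖u + t • v‖ - ‖u‖) / t = ∫ x, (|u x + t * v x| - |u x|) / t ∂μ := by
  have hsum : ‖u + t • v‖ = ∫ x, |u x + t * v x| ∂μ := by
    rw [L1.norm_eq_integral_norm]
    refine integral_congr_ae ?_
    filter_upwards [Lp.coeFn_add u (t • v), Lp.coeFn_smul t v] with x hadd hsmul
    rw [hadd, Pi.add_apply, hsmul, Pi.smul_apply, Real.norm_eq_abs, smul_eq_mul]
  have hu : ‖u‖ = ∫ x, |u x| ∂μ := L1.norm_eq_integral_norm u
  have hui := L1.integrable_coeFn u
  have hsumi : Integrable (fun x => |u x + t * v x|) μ :=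
    (hui.add ((L1.integrable_coeFn v).const_mul t)).abs
  rw [hsum, hu, ← integral_sub hsumi hui.abs, integral_div]

theorem L1.tendsto_norm_add_smul_sub_norm_div (u v : Lp ℝ 1 μ) :
    Tendsto (fun t : ℝ => (‖u + t • v‖ - ‖u‖) / t) (𝓝[>] 0)
      (𝓝 (∫ x, absDirDeriv (u x) (v x) ∂μ)) := by
  simp_rw [L1.norm_add_smul_sub_norm_div_eq_integral]
  have hu := (Lp.stronglyMeasurable u).measurable
  have hv := (Lp.stronglyMeasurable v).measurable
  refine tendsto_integral_filter_of_dominated_convergence (fun x => |v x|) ?_ ?_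
    (L1.integrable_coeFn v).abs (ae_of_all _ fun x => tendsto_abs_add_mul_sub_abs_div _ _)
  · exact Eventually.of_forall fun t =>
      (((hu.add (hv.const_mul t)).abs.sub hu.abs).div_const t).aestronglyMeasurable
  · filter_upwards [self_mem_nhdsWithin] with t (ht : 0 < t)
    exact ae_of_all _ fun x => abs_abs_add_mul_sub_abs_div_le ht _ _

end

theorem directional_derivative_L1_norm_general
    {Ω : Type*} [MeasurableSpace Ω] {ν : Measure Ω}
    (u v : Lp ℝ 1 ν) :
    Tendsto (fun lam : ℝ => (‖u + lam • v‖ - ‖u‖) / lam) (𝓝[>] (0 : ℝ))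
      (𝓝 ((∫ x in {x | 0 < u x}, v x ∂ν) - (∫ x in {x | u x < 0}, v x ∂ν)
          + ∫ x in {x | u x = 0}, |v x| ∂ν)) := by
  rw [← integral_absDirDeriv (Lp.stronglyMeasurable u).measurable (L1.integrable_coeFn v)]
  exact L1.tendsto_norm_add_smul_sub_norm_div u v

/-- the directional derivative of `j(u) = ‖u‖_{L¹}` at `u` in direction `v`. -/
theorem directional_derivative_L1_norm
    {Ω : Type*} [MeasurableSpace Ω] {ν : Measure Ω} [IsFiniteMeasure ν]
    (u v : Lp ℝ 1 ν) :
    Tendsto (fun lam : ℝ => (‖u + lam • v‖ - ‖u‖) / lam) (𝓝[>] (0 : ℝ))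
      (𝓝 ((∫ x in {x | 0 < u x}, v x ∂ν) - (∫ x in {x | u x < 0}, v x ∂ν)
          + ∫ x in {x | u x = 0}, |v x| ∂ν)) :=
  directional_derivative_L1_norm_general u v
end

section
/- Let ū ∈ L²(Q) and μ̄ ∈ L²(Q) with Q = Ω × (0,T), and suppose ∫_Q μ̄ (u − ū) dx dt ≤ 0 for all u in U_ad = {u ∈ L^∞(0,T;L¹(Ω)) : ‖u(t)‖_{L¹(Ω)} ≤ γ for a.a. t}. Then for almost all t ∈ (0,T), ∫_Ω μ̄(x,t)(v(x) − ū(x,t)) dx ≤ 0 for all v in the closed L¹(Ω)-ball B_γ of radius γ centered at 0. -/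
/-!
The support function of the closed `L¹`-ball of radius `γ` is `γ ‖·‖_∞`, so the claim amounts to
`γ ‖μ̄(t)‖_∞ ≤ ∫ μ̄(t) ū(t)` for a.e. `t`. Testing the integrated inequality with a control equal
to `w` on `Ω × E` and to `ū` elsewhere, for every measurable time set `E`, localizes it to
`∫ μ̄(t) w(t) ≤ ∫ μ̄(t) ū(t)` for a.e. `t`. Taking for `w(t)` the function `γ sign μ̄(t)`, spread
evenly over the level set `{|μ̄(t)| > q}`, gives `γ q ≤ ∫ μ̄(t) ū(t)` whenever this set is not
null; countably many rational `q` then bound `‖μ̄(t)‖_∞` by `∫ μ̄(t) ū(t) / γ`.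
-/

open MeasureTheory Filter Set
open scoped Classical

section OneSpace

variable {α : Type*} [MeasurableSpace α] {ν : Measure α}

lemma ae_abs_le_div_of_forall_rat {γ S : ℝ} (hγ : 0 < γ) {h : α → ℝ}
    (H : ∀ q : ℚ, ν {x | (q : ℝ) < |h x|} ≠ 0 → γ * q ≤ S) :
    ∀ᵐ x ∂ν, |h x| ≤ S / γ := by
  have hq : ∀ q : ℚ, ∀ᵐ x ∂ν, S / γ < q → |h x| ≤ q := by
    intro q
    by_cases hSq : S / γ < q
    · have h0 : ν {x | (q : ℝ) < |h x|} = 0 := by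
        by_contra hne
        have := H q hne
        rw [div_lt_iff₀ hγ] at hSq
        linarith
      filter_upwards [measure_eq_zero_iff_ae_notMem.1 h0] with x hx _ using not_lt.1 hx
    · exact ae_of_all _ fun _ h => absurd h hSq
  filter_upwards [ae_all_iff.2 hq] with x hx using le_of_forall_lt_rat_imp_le hx

lemma integral_mul_le_of_ae_abs_le {h v : α → ℝ} {c : ℝ} (hb : ∀ᵐ x ∂ν, |h x| ≤ c)
    (hv : Integrable v ν) : ∫ x, h x * v x ∂ν ≤ c * ∫ x, |v x| ∂ν := by
  calc ∫ x, h x * v x ∂ν ≤ ‖∫ x, h x * v x ∂ν‖ := le_abs_self _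
    _ ≤ ∫ x, c * |v x| ∂ν := by
        refine norm_integral_le_of_norm_le (hv.abs.const_mul c) ?_
        filter_upwards [hb] with x hx
        rw [Real.norm_eq_abs, abs_mul]
        exact mul_le_mul_of_nonneg_right hx (abs_nonneg _)
    _ = c * ∫ x, |v x| ∂ν := integral_const_mul c _

lemma integral_mul_sub_nonpos_of_forall_rat {γ : ℝ} (hγ : 0 < γ) {h f v : α → ℝ}
    (hh : AEStronglyMeasurable h ν) (hhf : Integrable (fun x => h x * f x) ν)
    (hS : 0 ≤ ∫ x, h x * f x ∂ν)
    (H : ∀ q : ℚ, ν {x | (q : ℝ) < |h x|} ≠ 0 → γ * q ≤ ∫ x, h x * f x ∂ν)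
    (hv : Integrable v ν) (hvγ : ∫ x, |v x| ∂ν ≤ γ) :
    ∫ x, h x * (v x - f x) ∂ν ≤ 0 := by
  have hb := ae_abs_le_div_of_forall_rat hγ H
  have hhv : Integrable (fun x => h x * v x) ν := hv.bdd_mul hh hb
  simp_rw [mul_sub]
  rw [integral_sub hhv hhf, sub_nonpos]
  calc ∫ x, h x * v x ∂ν ≤ (∫ x, h x * f x ∂ν) / γ * ∫ x, |v x| ∂ν :=
        integral_mul_le_of_ae_abs_le hb hv
    _ ≤ (∫ x, h x * f x ∂ν) / γ * γ := mul_le_mul_of_nonneg_left hvγ (div_nonneg hS hγ.le)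
    _ = ∫ x, h x * f x ∂ν := div_mul_cancel₀ _ hγ.ne'

end OneSpace

section Product

variable {α β : Type*} [MeasurableSpace α] {ν : Measure α}

/-- Normalising by `max (ν slice) ε` rather than by the measure of the slice keeps the function
bounded by `γ / ε`, while its slices stay in the `L¹`-ball of radius `γ`. -/
noncomputable def levelSetTest (ν : Measure α) (g : α × β → ℝ) (γ q ε : ℝ) (p : α × β) : ℝ :=
  {p : α × β | q < |g p|}.indicator
    (fun p => γ / max (ν.real {x | q < |g (x, p.2)|}) ε * if 0 ≤ g p then 1 else -1) p

section levelSetTest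

variable {g : α × β → ℝ} {γ q ε : ℝ}

lemma abs_levelSetTest (hγ : 0 ≤ γ) (hε : 0 < ε) (x : α) (t : β) :
    |levelSetTest ν g γ q ε (x, t)|
      = {x | q < |g (x, t)|}.indicator (fun _ => γ / max (ν.real {x | q < |g (x, t)|}) ε) x := by
  have hD : 0 ≤ γ / max (ν.real {x | q < |g (x, t)|}) ε := by positivity
  by_cases hx : q < |g (x, t)|
  · have hs : |(if 0 ≤ g (x, t) then 1 else -1 : ℝ)| = 1 := by split_ifs <;> simp
    simp only [levelSetTest, indicator_of_mem (show (x, t) ∈ {p : α × β | q < |g p|} from hx),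
      indicator_of_mem (show x ∈ {x | q < |g (x, t)|} from hx)]
    rw [abs_mul, hs, mul_one, abs_of_nonneg hD]
  · simp [levelSetTest, hx]

lemma abs_levelSetTest_le (hγ : 0 ≤ γ) (hε : 0 < ε) (p : α × β) :
    |levelSetTest ν g γ q ε p| ≤ γ / ε := by
  rw [abs_levelSetTest hγ hε p.1 p.2]
  refine (indicator_le_self' fun _ _ => by positivity) p.1 |>.trans ?_
  exact div_le_div_of_nonneg_left hγ hε (le_max_right _ _)

lemma mul_levelSetTest (x : α) (t : β) :
    g (x, t) * levelSetTest ν g γ q ε (x, t) = {x | q < |g (x, t)|}.indicator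
      (fun x => γ / max (ν.real {x | q < |g (x, t)|}) ε * |g (x, t)|) x := by
  by_cases hx : q < |g (x, t)|
  · have hs : g (x, t) * (if 0 ≤ g (x, t) then 1 else -1 : ℝ) = |g (x, t)| := by
      split_ifs with h
      · rw [mul_one, abs_of_nonneg h]
      · rw [mul_neg_one, abs_of_neg (not_le.1 h)]
    simp only [levelSetTest, indicator_of_mem (show (x, t) ∈ {p : α × β | q < |g p|} from hx),
      indicator_of_mem (show x ∈ {x | q < |g (x, t)|} from hx)]
    rw [mul_left_comm, hs]
  · simp [levelSetTest, hx]

variable [MeasurableSpace β]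

lemma measurable_levelSetTest [SFinite ν] (hg : Measurable g) :
    Measurable (levelSetTest ν g γ q ε) := by
  have hA : MeasurableSet {p : α × β | q < |g p|} := measurableSet_lt measurable_const hg.abs
  have hm : Measurable fun t => ν.real {x | q < |g (x, t)|} :=
    (measurable_measure_prodMk_right hA).ennreal_toReal
  refine Measurable.indicator ?_ hA
  exact (measurable_const.div ((hm.max measurable_const).comp measurable_snd)).mul
    (Measurable.ite (measurableSet_le measurable_const hg) measurable_const measurable_const)

lemma integral_abs_levelSetTest_le (hg : Measurable g) (hγ : 0 ≤ γ) (hε : 0 < ε) (t : β) :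
    ∫ x, |levelSetTest ν g γ q ε (x, t)| ∂ν ≤ γ := by
  have hA : MeasurableSet {x | q < |g (x, t)|} :=
    measurableSet_lt measurable_const (hg.comp measurable_prodMk_right).abs
  have hD : 0 < max (ν.real {x | q < |g (x, t)|}) ε := lt_max_of_lt_right hε
  simp_rw [abs_levelSetTest hγ hε, integral_indicator_const _ hA, smul_eq_mul]
  calc ν.real {x | q < |g (x, t)|} * (γ / max (ν.real {x | q < |g (x, t)|}) ε)
      ≤ max (ν.real {x | q < |g (x, t)|}) ε * (γ / max (ν.real {x | q < |g (x, t)|}) ε) :=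
        mul_le_mul_of_nonneg_right (le_max_left _ _) (by positivity)
    _ = γ := by field_simp

lemma mul_le_integral_mul_levelSetTest [IsFiniteMeasure ν] (hg : Measurable g) (hγ : 0 ≤ γ)
    (hε : 0 < ε) {t : β} (ht : ε ≤ ν.real {x | q < |g (x, t)|})
    (hint : Integrable (fun x => g (x, t) * levelSetTest ν g γ q ε (x, t)) ν) :
    γ * q ≤ ∫ x, g (x, t) * levelSetTest ν g γ q ε (x, t) ∂ν := by
  have hA : MeasurableSet {x | q < |g (x, t)|} :=
    measurableSet_lt measurable_const (hg.comp measurable_prodMk_right).abs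
  have hD : max (ν.real {x | q < |g (x, t)|}) ε = ν.real {x | q < |g (x, t)|} := max_eq_left ht
  have hm : 0 < ν.real {x | q < |g (x, t)|} := hε.trans_le ht
  calc γ * q = ∫ x, {x | q < |g (x, t)|}.indicator
        (fun _ => γ / max (ν.real {x | q < |g (x, t)|}) ε * q) x ∂ν := by
        rw [integral_indicator_const _ hA, smul_eq_mul, hD]
        field_simp
    _ ≤ ∫ x, g (x, t) * levelSetTest ν g γ q ε (x, t) ∂ν := by
        refine integral_mono ((integrable_const _).indicator hA) hint fun x => ?_
        rw [mul_levelSetTest]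
        exact indicator_le_indicator' fun hx => mul_le_mul_of_nonneg_left (le_of_lt hx)
          (by positivity)

end levelSetTest

variable [MeasurableSpace β] {ρ : Measure β}

lemma ae_ae_of_ae_prod_swap [SFinite ν] [SFinite ρ] {P : α × β → Prop}
    (h : ∀ᵐ p ∂ν.prod ρ, P p) : ∀ᵐ t ∂ρ, ∀ᵐ x ∂ν, P (x, t) := by
  rw [← Measure.prod_swap] at h
  exact Measure.ae_ae_of_ae_prod (ae_of_ae_map measurable_swap.aemeasurable h)

/-- The set `U_ad` of admissible controls. -/
def admissibleSet (ν : Measure α) (ρ : Measure β) (γ : ℝ) : Set (α × β → ℝ) :=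
  {u | AEMeasurable u (ν.prod ρ) ∧ ∀ᵐ t ∂ρ, ∫ x, |u (x, t)| ∂ν ≤ γ}

lemma piecewise_mem_admissibleSet {γ : ℝ} {E : Set β} (hE : MeasurableSet E)
    {w f : α × β → ℝ} (hw : w ∈ admissibleSet ν ρ γ) (hf : f ∈ admissibleSet ν ρ γ) :
    (Prod.snd ⁻¹' E).piecewise w f ∈ admissibleSet ν ρ γ := by
  refine ⟨(AEStronglyMeasurable.piecewise (hE.preimage measurable_snd)
    hw.1.aestronglyMeasurable.restrict hf.1.aestronglyMeasurable.restrict).aemeasurable, ?_⟩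
  filter_upwards [hw.2, hf.2] with t hwt hft
  by_cases ht : t ∈ E
  · simpa [Set.piecewise, ht] using hwt
  · simpa [Set.piecewise, ht] using hft

lemma ae_integral_mul_le_of_forall_piecewise [SFinite ν] [SFinite ρ] {g f w : α × β → ℝ}
    (hgf : Integrable (fun p => g p * f p) (ν.prod ρ))
    (hgw : Integrable (fun p => g p * w p) (ν.prod ρ))
    (h : ∀ E, MeasurableSet E →
      ∫ p, g p * ((Prod.snd ⁻¹' E).piecewise w f p - f p) ∂ν.prod ρ ≤ 0) :
    ∀ᵐ t ∂ρ, ∫ x, g (x, t) * w (x, t) ∂ν ≤ ∫ x, g (x, t) * f (x, t) ∂ν := by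
  set F : α × β → ℝ := fun p => g p * f p - g p * w p
  have hF : Integrable F (ν.prod ρ) := hgf.sub hgw
  have hsets : ∀ E, MeasurableSet E → 0 ≤ ∫ t in E, ∫ x, F (x, t) ∂ν ∂ρ := by
    intro E hE
    have hpatch : (fun p => g p * ((Prod.snd ⁻¹' E).piecewise w f p - f p))
        = (Prod.snd ⁻¹' E).indicator (fun p => -F p) := by
      ext p
      by_cases hp : p.2 ∈ E
      · simp [Set.piecewise, hp, F]; ring
      · simp [Set.piecewise, hp]
    have hslice : ∫ t in E, ∫ x, F (x, t) ∂ν ∂ρ = ∫ p in Prod.snd ⁻¹' E, F p ∂ν.prod ρ := by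
      have hFE : Integrable F (ν.prod (ρ.restrict E)) := by
        simpa [← univ_prod, ← Measure.prod_restrict] using hF.restrict (s := Prod.snd ⁻¹' E)
      rw [← univ_prod, ← Measure.prod_restrict, Measure.restrict_univ, integral_prod_symm F hFE]
    have := h E hE
    rw [hpatch, integral_indicator (hE.preimage measurable_snd), integral_neg] at this
    linarith
  filter_upwards [ae_nonneg_of_forall_setIntegral_nonneg hF.integral_prod_right
    (fun E hE _ => hsets E hE), hgf.prod_left_ae, hgw.prod_left_ae] with t ht hft hwt
  rw [Pi.zero_apply, integral_sub hft hwt] at ht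
  linarith

lemma ae_mul_le_integral_mul_of_le_measureReal [IsFiniteMeasure ν] [SFinite ρ] {γ : ℝ}
    (hγ : 0 ≤ γ) {g f : α × β → ℝ} (hg : Measurable g) (hgi : Integrable g (ν.prod ρ))
    (hgf : Integrable (fun p => g p * f p) (ν.prod ρ)) (hf : f ∈ admissibleSet ν ρ γ)
    (hVI : ∀ u ∈ admissibleSet ν ρ γ, ∫ p, g p * (u p - f p) ∂ν.prod ρ ≤ 0)
    (q : ℝ) {ε : ℝ} (hε : 0 < ε) :
    ∀ᵐ t ∂ρ, ε ≤ ν.real {x | q < |g (x, t)|} → γ * q ≤ ∫ x, g (x, t) * f (x, t) ∂ν := by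
  set w := levelSetTest ν g γ q ε
  have hw_meas : Measurable w := measurable_levelSetTest hg
  have hw : w ∈ admissibleSet ν ρ γ :=
    ⟨hw_meas.aemeasurable, ae_of_all _ (integral_abs_levelSetTest_le hg hγ hε)⟩
  have hgw : Integrable (fun p => g p * w p) (ν.prod ρ) :=
    hgi.mul_bdd hw_meas.aestronglyMeasurable (ae_of_all _ (abs_levelSetTest_le hγ hε))
  filter_upwards [ae_integral_mul_le_of_forall_piecewise hgf hgw
      (fun E hE => hVI _ (piecewise_mem_admissibleSet hE hw hf)), hgw.prod_left_ae]
    with t hle hgwt ht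
  exact (mul_le_integral_mul_levelSetTest hg hγ hε ht hgwt).trans hle

theorem ae_integral_mul_sub_nonpos_of_measurable [IsFiniteMeasure ν] [SFinite ρ] {γ : ℝ}
    (hγ : 0 < γ) {g f : α × β → ℝ} (hg : Measurable g) (hgi : Integrable g (ν.prod ρ))
    (hgf : Integrable (fun p => g p * f p) (ν.prod ρ)) (hf : f ∈ admissibleSet ν ρ γ)
    (hVI : ∀ u ∈ admissibleSet ν ρ γ, ∫ p, g p * (u p - f p) ∂ν.prod ρ ≤ 0) :
    ∀ᵐ t ∂ρ, ∀ v : α → ℝ, Integrable v ν → ∫ x, |v x| ∂ν ≤ γ →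
      ∫ x, g (x, t) * (v x - f (x, t)) ∂ν ≤ 0 := by
  have hzero : (0 : α × β → ℝ) ∈ admissibleSet ν ρ γ :=
    ⟨aemeasurable_const, ae_of_all _ fun _ => by simpa using hγ.le⟩
  have hS : ∀ᵐ t ∂ρ, 0 ≤ ∫ x, g (x, t) * f (x, t) ∂ν := by
    filter_upwards [ae_integral_mul_le_of_forall_piecewise hgf (by simp)
      fun E hE => hVI _ (piecewise_mem_admissibleSet hE hzero hf)] with t ht
    simpa using ht
  have hlevel : ∀ᵐ t ∂ρ, ∀ q : ℚ, ∀ n : ℕ, 1 / (n + 1 : ℝ) ≤ ν.real {x | (q : ℝ) < |g (x, t)|} →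
      γ * q ≤ ∫ x, g (x, t) * f (x, t) ∂ν := by
    simp only [ae_all_iff]
    exact fun q n => ae_mul_le_integral_mul_of_le_measureReal hγ.le hg hgi hgf hf hVI q
      Nat.one_div_pos_of_nat
  filter_upwards [hS, hlevel, hgf.prod_left_ae] with t hSt hlevelt hgft v hv hvγ
  refine integral_mul_sub_nonpos_of_forall_rat hγ
    (hg.comp measurable_prodMk_right).aestronglyMeasurable hgft hSt (fun q hq => ?_) hv hvγ
  obtain ⟨n, hn⟩ := exists_nat_one_div_lt (ENNReal.toReal_pos hq (measure_ne_top _ _))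
  exact hlevelt q n hn.le

theorem ae_integral_mul_sub_nonpos [IsFiniteMeasure ν] [SFinite ρ] {γ : ℝ}
    (hγ : 0 < γ) {g f : α × β → ℝ} (hgi : Integrable g (ν.prod ρ))
    (hgf : Integrable (fun p => g p * f p) (ν.prod ρ)) (hf : f ∈ admissibleSet ν ρ γ)
    (hVI : ∀ u ∈ admissibleSet ν ρ γ, ∫ p, g p * (u p - f p) ∂ν.prod ρ ≤ 0) :
    ∀ᵐ t ∂ρ, ∀ v : α → ℝ, Integrable v ν → ∫ x, |v x| ∂ν ≤ γ →
      ∫ x, g (x, t) * (v x - f (x, t)) ∂ν ≤ 0 := by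
  have hg : g =ᵐ[ν.prod ρ] hgi.1.mk g := hgi.1.ae_eq_mk
  have hmeas := ae_integral_mul_sub_nonpos_of_measurable hγ hgi.1.stronglyMeasurable_mk.measurable
    (hgi.congr hg) (hgf.congr (hg.mono fun p hp => by simp only [hp])) hf
    fun u hu => (integral_congr_ae (hg.mono fun p hp => by simp only [hp])).symm.trans_le (hVI u hu)
  filter_upwards [hmeas, ae_ae_of_ae_prod_swap hg] with t ht hgt v hv hvγ
  exact (integral_congr_ae (hgt.mono fun x hx => by simp only [hx])).trans_le (ht v hv hvγ)

end Product

theorem localization_variational_inequality_general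
    {Ω : Type*} [MeasurableSpace Ω] (ν : Measure Ω) [IsFiniteMeasure ν]
    (T γ : ℝ) (hγ : 0 < γ)
    (ubar mubar : Ω × ℝ → ℝ)
    (hu2 : MemLp ubar 2 (ν.prod (volume.restrict (Set.Ioo (0:ℝ) T))))
    (hmu2 : MemLp mubar 2 (ν.prod (volume.restrict (Set.Ioo (0:ℝ) T))))
    (hu_ad : ∀ᵐ t ∂(volume.restrict (Set.Ioo (0:ℝ) T)),
      Integrable (fun x => ubar (x, t)) ν ∧ ∫ x, |ubar (x, t)| ∂ν ≤ γ)
    (hVI : ∀ u : Ω × ℝ → ℝ,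
      AEMeasurable u (ν.prod (volume.restrict (Set.Ioo (0:ℝ) T))) →
      (∀ᵐ t ∂(volume.restrict (Set.Ioo (0:ℝ) T)), ∫ x, |u (x, t)| ∂ν ≤ γ) →
      ∫ p, mubar p * (u p - ubar p) ∂(ν.prod (volume.restrict (Set.Ioo (0:ℝ) T))) ≤ 0) :
    ∀ᵐ t ∂(volume.restrict (Set.Ioo (0:ℝ) T)),
      ∀ v : Ω → ℝ, Integrable v ν → ∫ x, |v x| ∂ν ≤ γ →
        ∫ x, mubar (x, t) * (v x - ubar (x, t)) ∂ν ≤ 0 :=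
  ae_integral_mul_sub_nonpos hγ (hmu2.integrable one_le_two) (hmu2.integrable_mul hu2)
    ⟨hu2.aestronglyMeasurable.aemeasurable, hu_ad.mono fun _ ht => ht.2⟩
    fun u hu => hVI u hu.1 hu.2

/-- localization in time of the integrated variational inequality. -/
theorem localization_variational_inequality
    {Ω : Type*} [MeasurableSpace Ω] (ν : Measure Ω) [IsFiniteMeasure ν]
    (T γ : ℝ) (hT : 0 < T) (hγ : 0 < γ)
    (ubar mubar : Ω × ℝ → ℝ)
    (hu2 : MemLp ubar 2 (ν.prod (volume.restrict (Set.Ioo (0:ℝ) T))))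
    (hmu2 : MemLp mubar 2 (ν.prod (volume.restrict (Set.Ioo (0:ℝ) T))))
    (hu_ad : ∀ᵐ t ∂(volume.restrict (Set.Ioo (0:ℝ) T)),
      Integrable (fun x => ubar (x, t)) ν ∧ ∫ x, |ubar (x, t)| ∂ν ≤ γ)
    (hVI : ∀ u : Ω × ℝ → ℝ,
      AEMeasurable u (ν.prod (volume.restrict (Set.Ioo (0:ℝ) T))) →
      (∀ᵐ t ∂(volume.restrict (Set.Ioo (0:ℝ) T)), ∫ x, |u (x, t)| ∂ν ≤ γ) →
      ∫ p, mubar p * (u p - ubar p) ∂(ν.prod (volume.restrict (Set.Ioo (0:ℝ) T))) ≤ 0) :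
    ∀ᵐ t ∂(volume.restrict (Set.Ioo (0:ℝ) T)),
      ∀ v : Ω → ℝ, Integrable v ν → ∫ x, |v x| ∂ν ≤ γ →
        ∫ x, mubar (x, t) * (v x - ubar (x, t)) ∂ν ≤ 0 :=
  localization_variational_inequality_general ν T γ hγ ubar mubar hu2 hmu2 hu_ad hVI
end

section
/- Let ū ∈ U_ad and μ̄ ∈ L^∞(Q) satisfy ∫_Ω μ̄(t)(v − ū(t)) dx ≤ 0 for all v ∈ B_γ and a.a. t. If ‖ū(t)‖_{L¹(Ω)} = γ and μ̄(t) ≢ 0 in Ω, then supp(ū(t)) ⊂ {x ∈ Ω : |μ̄(x,t)| = ‖μ̄(t)‖_{L^∞(Ω)}}, i.e., |ū(x,t)| > 0 implies |μ̄(x,t)| = ‖μ̄(t)‖_{L^∞(Ω)} for a.a. x. -/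
open MeasureTheory Filter Topology Set
open scoped ENNReal

/-!
Fix a time `t` where the constraint is active, and write `μ = μ̄(t)`, `u = ū(t)`,
`M = ‖μ‖_∞`. Pointwise `μ u ≤ M |u|`, so `∫ μ u ≤ M γ`. Conversely, for `c < M` the set
`A = {|μ| > c}` has positive measure, and testing the variational inequality with
`v = (γ / ν A) · sign μ · 1_A` gives `γ c ≤ ∫ μ v ≤ ∫ μ u`. Letting `c → M` gives
`∫ μ u = M γ`: the nonnegative function `M |u| - μ u` has integral zero, so `μ u = M |u|` a.e.,
which forces `|μ| = M` wherever `u ≠ 0`.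
-/

namespace MeasureTheory

lemma MemLp.ae_memLp_top_prodMk_right {α β E : Type*} [MeasurableSpace α] [MeasurableSpace β]
    [NormedAddCommGroup E] {μ : Measure α} {ν : Measure β} [SFinite μ] [SFinite ν]
    {f : α × β → E} (hf : MemLp f ∞ (μ.prod ν)) :
    ∀ᵐ y ∂ν, MemLp (fun x => f (x, y)) ∞ μ := by
  have hbound : ∀ᵐ w ∂ν.prod μ, ‖f w.swap‖ ≤ lpNorm f ∞ (μ.prod ν) :=
    Measure.measurePreserving_swap.quasiMeasurePreserving.ae (ae_le_lpNorm_exponent_top hf)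
  filter_upwards [hf.1.prodMk_right, Measure.ae_ae_of_ae_prod hbound] with y hmeas hy
  exact memLp_top_of_bound hmeas _ hy

variable {α : Type*} [MeasurableSpace α] {ν : Measure α} {φ : α → ℝ}

lemma measure_lt_abs_pos_of_lt_lpNorm_top (hφ : MemLp φ ∞ ν) {c : ℝ} (hc : 0 ≤ c)
    (hcφ : c < lpNorm φ ∞ ν) : 0 < ν {x | c < |φ x|} := by
  refine pos_iff_ne_zero.2 fun hnull => hcφ.not_ge ?_
  have hbound : ∀ᵐ x ∂ν, ‖φ x‖ ≤ c := by
    simpa [ae_iff] using hnull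
  rw [← toReal_eLpNorm hφ.1, eLpNorm_exponent_top]
  exact ENNReal.toReal_le_of_le_ofReal hc (eLpNormEssSup_le_of_ae_bound hbound)

lemma exists_integral_mul_ge_of_le_abs_on [IsFiniteMeasure ν] (hφ : MemLp φ ∞ ν)
    (hφm : Measurable φ) {A : Set α} (hA : MeasurableSet A) (hApos : 0 < ν.real A) {r c : ℝ}
    (hr : 0 ≤ r) (hcA : ∀ x ∈ A, c ≤ |φ x|) :
    ∃ v : α → ℝ, Integrable v ν ∧ ∫ x, |v x| ∂ν ≤ r ∧ r * c ≤ ∫ x, φ x * v x ∂ν := by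
  set s := r / ν.real A
  have hs : 0 ≤ s := div_nonneg hr hApos.le
  -- `φ x / |φ x|` is the sign of `φ x`, with value `0` at `0` by the junk value of `/`.
  set v := A.indicator fun x => s * (φ x / |φ x|)
  have hv_le : ∀ x, |v x| ≤ A.indicator (fun _ => s) x := by
    intro x
    by_cases hx : x ∈ A
    · simp only [v, indicator_of_mem hx, abs_mul, abs_div, abs_abs, abs_of_nonneg hs]
      exact mul_le_of_le_one_right hs (div_self_le_one _)
    · simp [v, hx]
  have hφv : ∀ x, A.indicator (fun _ => s * c) x ≤ φ x * v x := by
    intro x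
    by_cases hx : x ∈ A
    · have hsign : φ x * (φ x / |φ x|) = |φ x| := by
        rcases eq_or_ne (φ x) 0 with h0 | h0
        · simp [h0]
        · rw [← mul_div_assoc, ← abs_mul_abs_self, mul_div_cancel_right₀ _ (abs_ne_zero.2 h0)]
      rw [indicator_of_mem hx, show v x = _ from indicator_of_mem hx _, mul_left_comm, hsign]
      exact mul_le_mul_of_nonneg_left (hcA x hx) hs
    · simp [v, hx]
  have hv : Integrable v ν :=
    ((integrable_const s).indicator hA).mono'
      ((hφm.div hφm.abs).const_mul s |>.indicator hA).aestronglyMeasurable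
      (Eventually.of_forall hv_le)
  refine ⟨v, hv, ?_, ?_⟩
  · calc ∫ x, |v x| ∂ν ≤ ∫ x, A.indicator (fun _ => s) x ∂ν :=
          integral_mono hv.abs ((integrable_const s).indicator hA) hv_le
      _ = r := by rw [integral_indicator_const _ hA, smul_eq_mul, mul_div_cancel₀ _ hApos.ne']
  · calc r * c = ∫ x, A.indicator (fun _ => s * c) x ∂ν := by
          rw [integral_indicator_const _ hA, smul_eq_mul, ← mul_assoc, mul_div_cancel₀ _ hApos.ne']
      _ ≤ ∫ x, φ x * v x ∂ν :=
          integral_mono ((integrable_const _).indicator hA) (hv.mul_of_top_right hφ) hφv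

lemma exists_integral_mul_ge_of_lt_lpNorm_top [IsFiniteMeasure ν] (hφ : MemLp φ ∞ ν)
    {r c : ℝ} (hr : 0 ≤ r) (hc : c < lpNorm φ ∞ ν) :
    ∃ v : α → ℝ, Integrable v ν ∧ ∫ x, |v x| ∂ν ≤ r ∧ r * c ≤ ∫ x, φ x * v x ∂ν := by
  rcases lt_or_ge c 0 with hneg | hnonneg
  · refine ⟨0, integrable_zero _ _ _, by simpa using hr, ?_⟩
    simpa using mul_nonpos_of_nonneg_of_nonpos hr hneg.le
  set ψ := hφ.1.mk φ
  have hψm : Measurable ψ := hφ.1.stronglyMeasurable_mk.measurable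
  have hφψ : φ =ᵐ[ν] ψ := hφ.1.ae_eq_mk
  have hA : {x | c < |φ x|} =ᵐ[ν] {x | c < |ψ x|} := by
    filter_upwards [hφψ] with x hx
    change (c < |φ x|) = (c < |ψ x|)
    rw [hx]
  have hApos : 0 < ν.real {x | c < |ψ x|} := by
    rw [measureReal_def, ← measure_congr hA]
    exact ENNReal.toReal_pos (measure_lt_abs_pos_of_lt_lpNorm_top hφ hnonneg hc).ne'
      (measure_ne_top _ _)
  obtain ⟨v, hv, hvr, hcv⟩ := exists_integral_mul_ge_of_le_abs_on (hφ.ae_eq hφψ) hψm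
    (measurableSet_lt measurable_const hψm.abs) hApos hr fun x hx => le_of_lt hx
  refine ⟨v, hv, hvr, hcv.trans_eq (integral_congr_ae ?_)⟩
  filter_upwards [hφψ] with x hx
  rw [hx]

lemma ae_abs_eq_lpNorm_top_of_forall_integral_mul_le [IsFiniteMeasure ν] (hφ : MemLp φ ∞ ν)
    {u : α → ℝ} (hu : Integrable u ν)
    (hmax : ∀ v : α → ℝ, Integrable v ν → ∫ x, |v x| ∂ν ≤ ∫ x, |u x| ∂ν →
      ∫ x, φ x * (v x - u x) ∂ν ≤ 0) :
    ∀ᵐ x ∂ν, u x ≠ 0 → |φ x| = lpNorm φ ∞ ν := by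
  set M := lpNorm φ ∞ ν
  have hbound : ∀ᵐ x ∂ν, |φ x| ≤ M := ae_le_lpNorm_exponent_top hφ
  have hpoint : ∀ᵐ x ∂ν, φ x * u x ≤ M * |u x| := by
    filter_upwards [hbound] with x hx
    exact (le_abs_self _).trans (abs_mul (φ x) (u x) ▸ by gcongr)
  have hφu : Integrable (fun x => φ x * u x) ν := hu.mul_of_top_right hφ
  have hMu : Integrable (fun x => M * |u x|) ν := hu.abs.const_mul M
  have hpairing : ∀ v : α → ℝ, Integrable v ν → ∫ x, |v x| ∂ν ≤ ∫ x, |u x| ∂ν →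
      ∫ x, φ x * v x ∂ν ≤ ∫ x, φ x * u x ∂ν := by
    intro v hv hvu
    have hφv : Integrable (fun x => φ x * v x) ν := hv.mul_of_top_right hφ
    have := hmax v hv hvu
    simp_rw [mul_sub] at this
    rwa [integral_sub hφv hφu, sub_nonpos] at this
  have hlower : ∫ x, M * |u x| ∂ν ≤ ∫ x, φ x * u x ∂ν := by
    set r := ∫ x, |u x| ∂ν
    have hr : 0 ≤ r := integral_nonneg fun x => abs_nonneg (u x)
    have hlim : Tendsto (fun c => r * c) (𝓝[<] M) (𝓝 (r * M)) :=
      ((continuous_const_mul r).tendsto M).mono_left nhdsWithin_le_nhds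
    rw [integral_const_mul, mul_comm]
    refine le_of_tendsto hlim (eventually_nhdsWithin_of_forall fun c hc => ?_)
    obtain ⟨v, hv, hvu, hcv⟩ := exists_integral_mul_ge_of_lt_lpNorm_top hφ hr hc
    exact hcv.trans (hpairing v hv hvu)
  have hequal : (fun x => φ x * u x) =ᵐ[ν] fun x => M * |u x| :=
    (integral_eq_iff_of_ae_le hφu hMu hpoint).1
      (le_antisymm (integral_mono_ae hφu hMu hpoint) hlower)
  filter_upwards [hequal, hbound] with x hx hb hu0
  have : M * |u x| ≤ |φ x| * |u x| := by
    rw [← hx, ← abs_mul]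
    exact le_abs_self _
  exact le_antisymm hb (le_of_mul_le_mul_right this (abs_pos.2 hu0))

end MeasureTheory

theorem support_structure_active_constraint_general
    {Ω : Type*} [MeasurableSpace Ω] (ν : Measure Ω) [IsFiniteMeasure ν]
    (T γ : ℝ)
    (ubar mubar : Ω × ℝ → ℝ)
    (hmu_inf : MemLp mubar ⊤ (ν.prod (volume.restrict (Set.Ioo (0:ℝ) T))))
    (hu_ad : ∀ᵐ t ∂(volume.restrict (Set.Ioo (0:ℝ) T)),
      Integrable (fun x => ubar (x, t)) ν ∧ ∫ x, |ubar (x, t)| ∂ν ≤ γ)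
    (hVI : ∀ᵐ t ∂(volume.restrict (Set.Ioo (0:ℝ) T)),
      ∀ v : Ω → ℝ, Integrable v ν → ∫ x, |v x| ∂ν ≤ γ →
        ∫ x, mubar (x, t) * (v x - ubar (x, t)) ∂ν ≤ 0) :
    ∀ᵐ t ∂(volume.restrict (Set.Ioo (0:ℝ) T)),
      ((∫ x, |ubar (x, t)| ∂ν) = γ ∧ ¬ (∀ᵐ x ∂ν, mubar (x, t) = 0)) →
        ∀ᵐ x ∂ν, 0 < |ubar (x, t)| →
          |mubar (x, t)| = (eLpNorm (fun x => mubar (x, t)) ⊤ ν).toReal := by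
  filter_upwards [hmu_inf.ae_memLp_top_prodMk_right, hu_ad, hVI] with t hslice hadm hvi
  rintro ⟨hactive, -⟩
  subst hactive
  filter_upwards [ae_abs_eq_lpNorm_top_of_forall_integral_mul_le hslice hadm.1 hvi]
    with x hx hpos
  rw [toReal_eLpNorm hslice.1]
  exact hx (abs_pos.1 hpos)

/-- sparsity structure: where the constraint is active and the multiplier is
nontrivial, the support of `ū(t)` lies in the set where `|μ̄(·,t)|` attains its `L^∞` norm. -/
theorem support_structure_active_constraint
    {Ω : Type*} [MeasurableSpace Ω] (ν : Measure Ω) [IsFiniteMeasure ν]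
    (T γ : ℝ) (hT : 0 < T) (hγ : 0 < γ)
    (ubar mubar : Ω × ℝ → ℝ)
    (hmu_inf : MemLp mubar ⊤ (ν.prod (volume.restrict (Set.Ioo (0:ℝ) T))))
    (hu_ad : ∀ᵐ t ∂(volume.restrict (Set.Ioo (0:ℝ) T)),
      Integrable (fun x => ubar (x, t)) ν ∧ ∫ x, |ubar (x, t)| ∂ν ≤ γ)
    (hVI : ∀ᵐ t ∂(volume.restrict (Set.Ioo (0:ℝ) T)),
      ∀ v : Ω → ℝ, Integrable v ν → ∫ x, |v x| ∂ν ≤ γ →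
        ∫ x, mubar (x, t) * (v x - ubar (x, t)) ∂ν ≤ 0) :
    ∀ᵐ t ∂(volume.restrict (Set.Ioo (0:ℝ) T)),
      ((∫ x, |ubar (x, t)| ∂ν) = γ ∧ ¬ (∀ᵐ x ∂ν, mubar (x, t) = 0)) →
        ∀ᵐ x ∂ν, 0 < |ubar (x, t)| →
          |mubar (x, t)| = (eLpNorm (fun x => mubar (x, t)) ⊤ ν).toReal :=
  support_structure_active_constraint_general ν T γ ubar mubar hmu_inf hu_ad hVI
end
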